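/- arXiv:1606.03257 — 2 statements merged into one kernel-verified Lean document; each statement's English description precedes it below -/
import Mathlib

section
/- If G is a finite simple graph, then γ_cer(G) ≤ 2·γ(G). -/
open Finset

variable {V : Type*} [Fintype V] [DecidableEq V]

/-- `D` is a dominating set of `G`: every vertex outside `D` has a neighbour in `D`. -/
def IsDomSet (G : SimpleGraph V) (D : Finset V) : Prop :=
  ∀ v ∉ D, ∃ u ∈ D, G.Adj u v

/-- `D` is a certified dominating set of `G`: it is dominating and every vertex of `D`
has either zero or at least two neighbours outside `D`. -/
def IsCertDomSet (G : SimpleGraph V) [DecidableRel G.Adj] (D : Finset V) : Prop :=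
  IsDomSet G D ∧ ∀ v ∈ D, (G.neighborFinset v \ D).card = 0 ∨ 2 ≤ (G.neighborFinset v \ D).card

/-- The domination number: minimum cardinality of a dominating set. -/
noncomputable def gamma (G : SimpleGraph V) : ℕ :=
  sInf {n | ∃ D : Finset V, IsDomSet G D ∧ D.card = n}

/-- The certified domination number: minimum cardinality of a certified dominating set. -/
noncomputable def gammaCer (G : SimpleGraph V) [DecidableRel G.Adj] : ℕ :=
  sInf {n | ∃ D : Finset V, IsCertDomSet G D ∧ D.card = n}

/-- A leaf is a vertex of degree one. -/
abbrev IsLeaf (G : SimpleGraph V) [DecidableRel G.Adj] (v : V) : Prop := G.degree v = 1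

/-- The set of leaf-neighbours of a vertex. -/
abbrev leafNbrs (G : SimpleGraph V) [DecidableRel G.Adj] (v : V) : Finset V :=
  (G.neighborFinset v).filter (fun l => G.degree l = 1)

/-- A weak support is a vertex adjacent to exactly one leaf. -/
abbrev IsWeakSupport (G : SimpleGraph V) [DecidableRel G.Adj] (v : V) : Prop :=
  (leafNbrs G v).card = 1

/-- A strong support is a vertex adjacent to at least two leaves. -/
abbrev IsStrongSupport (G : SimpleGraph V) [DecidableRel G.Adj] (v : V) : Prop :=
  2 ≤ (leafNbrs G v).card

/- ------------------------------------------------------------------ -/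
/- Auxiliary lemmas for the proof of `gammaCer_le_two_gamma`.          -/
/- ------------------------------------------------------------------ -/

private lemma isDomSet_univ (G : SimpleGraph V) : IsDomSet G (univ : Finset V) :=
  fun v hv => absurd (mem_univ v) hv

private lemma gamma_le_card {G : SimpleGraph V} {D : Finset V} (h : IsDomSet G D) :
    gamma G ≤ D.card := Nat.sInf_le ⟨D, h, rfl⟩

private lemma exists_gamma_set (G : SimpleGraph V) :
    ∃ D : Finset V, IsDomSet G D ∧ D.card = gamma G := by
  have hne : {n | ∃ D : Finset V, IsDomSet G D ∧ D.card = n}.Nonempty :=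
    ⟨(univ : Finset V).card, univ, isDomSet_univ G, rfl⟩
  obtain ⟨D, hD, hc⟩ := Nat.sInf_mem hne
  exact ⟨D, hD, hc⟩

private lemma erase_dom {G : SimpleGraph V} {D : Finset V} {t : V}
    (hD : IsDomSet G D)
    (hdomt : ∃ d ∈ D.erase t, G.Adj d t)
    (hpriv : ∀ x, x ∉ D → G.Adj t x → ∃ d ∈ D.erase t, G.Adj d x) :
    IsDomSet G (D.erase t) := by
  intro y hy
  by_cases hyt : y = t
  · subst hyt; exact hdomt
  · have hyD : y ∉ D := fun hyD => hy (Finset.mem_erase.mpr ⟨hyt, hyD⟩)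
    obtain ⟨d, hd, hadj⟩ := hD y hyD
    by_cases hdt : d = t
    · subst hdt; exact hpriv y hyD hadj
    · exact ⟨d, Finset.mem_erase.mpr ⟨hdt, hd⟩, hadj⟩

private lemma no_erase_dom {G : SimpleGraph V} {D : Finset V} {t : V}
    (hD : IsDomSet G D) (hcard : D.card = gamma G) (ht : t ∈ D)
    (hdomt : ∃ d ∈ D.erase t, G.Adj d t)
    (hpriv : ∀ x, x ∉ D → G.Adj t x → ∃ d ∈ D.erase t, G.Adj d x) : False := by
  have h1 := gamma_le_card (erase_dom hD hdomt hpriv)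
  rw [Finset.card_erase_of_mem ht, hcard] at h1
  have h2 : 1 ≤ gamma G := by
    rw [← hcard]; exact Finset.card_pos.mpr ⟨t, ht⟩
  omega

private lemma not_nbrs_subset {G : SimpleGraph V} [DecidableRel G.Adj] {D : Finset V} {t : V}
    (hD : IsDomSet G D) (hcard : D.card = gamma G) (ht : t ∈ D)
    (hne : (G.neighborFinset t).Nonempty) (hsub : G.neighborFinset t ⊆ D) : False := by
  obtain ⟨d, hd⟩ := hne
  have hadj : G.Adj t d := (SimpleGraph.mem_neighborFinset _ _ _).mp hd
  refine no_erase_dom hD hcard ht ⟨d, ?_, hadj.symm⟩ ?_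
  · exact Finset.mem_erase.mpr ⟨(G.ne_of_adj hadj).symm, hsub hd⟩
  · intro x hx hadjx
    exact absurd (hsub ((SimpleGraph.mem_neighborFinset _ _ _).mpr hadjx)) hx

private lemma swap_dom {G : SimpleGraph V} {D : Finset V} {v u : V}
    (hD : IsDomSet G D) (hadj : G.Adj v u)
    (hx : ∀ x, x ∉ D → G.Adj v x → x = u) :
    IsDomSet G (insert u (D.erase v)) := by
  intro y hy
  by_cases hyv : y = v
  · subst hyv
    exact ⟨u, Finset.mem_insert_self _ _, hadj.symm⟩
  · have hyD : y ∉ D := fun h =>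
      hy (Finset.mem_insert_of_mem (Finset.mem_erase.mpr ⟨hyv, h⟩))
    have hyu : y ≠ u := by rintro rfl; exact hy (Finset.mem_insert_self _ _)
    obtain ⟨d, hd, hadjd⟩ := hD y hyD
    by_cases hdv : d = v
    · subst hdv; exact absurd (hx y hyD hadjd) hyu
    · exact ⟨d, Finset.mem_insert_of_mem (Finset.mem_erase.mpr ⟨hdv, hd⟩), hadjd⟩

private lemma swap_card {D : Finset V} {v u : V} (hv : v ∈ D) (hu : u ∉ D) :
    (insert u (D.erase v)).card = D.card := by
  rw [Finset.card_insert_of_notMem (fun h => hu (Finset.mem_of_mem_erase h)),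
      Finset.card_erase_of_mem hv]
  have : 1 ≤ D.card := Finset.card_pos.mpr ⟨v, hv⟩
  omega

private lemma eq_singleton_of_card_one {s : Finset V} {a : V}
    (h : s.card = 1) (ha : a ∈ s) : s = {a} := by
  obtain ⟨b, hb⟩ := Finset.card_eq_one.mp h
  rw [hb] at ha ⊢
  rw [Finset.mem_singleton.mp ha]

theorem gammaCer_le_two_gamma (G : SimpleGraph V) [DecidableRel G.Adj] :
    gammaCer G ≤ 2 * gamma G := by
  classical
  obtain ⟨D₀, hD₀, hc₀⟩ := exists_gamma_set G
  set S : Finset (Finset V) :=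
    univ.powerset.filter (fun D => IsDomSet G D ∧ D.card = gamma G) with hS
  have hD₀S : D₀ ∈ S := by
    simp only [hS, Finset.mem_filter, Finset.mem_powerset]
    exact ⟨Finset.subset_univ _, hD₀, hc₀⟩
  -- the potential
  set nV : ℕ := Fintype.card V with hnV
  set phiKey : Finset V → ℕ := fun D =>
    (nV + 1) * (D.filter (fun z => G.degree z = 1)).card
      + (D.filter (fun z => (G.neighborFinset z \ D).card = 1)).card with hphi
  obtain ⟨D, hDS, hmin⟩ := Finset.exists_min_image S phiKey ⟨D₀, hD₀S⟩
  have hdom : IsDomSet G D := by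
    have := Finset.mem_filter.mp hDS; exact this.2.1
  have hcard : D.card = gamma G := by
    have := Finset.mem_filter.mp hDS; exact this.2.2
  -- H1 : at the optimum, the support of any leaf of D is itself a leaf
  have H1 : ∀ ℓ ∈ D, G.degree ℓ = 1 → ∀ s, G.neighborFinset ℓ = {s} → G.degree s = 1 := by
    intro ℓ hℓ hdegℓ s hNs
    by_contra hs
    have hsmem : s ∈ G.neighborFinset ℓ := by rw [hNs]; exact Finset.mem_singleton_self s
    have hadj : G.Adj ℓ s := (SimpleGraph.mem_neighborFinset _ _ _).mp hsmem
    have hsD : s ∉ D := by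
      intro hsD
      exact not_nbrs_subset hdom hcard hℓ ⟨s, hsmem⟩
        (by rw [hNs]; exact Finset.singleton_subset_iff.mpr hsD)
    set D₂ : Finset V := insert s (D.erase ℓ) with hD₂
    have hdom₂ : IsDomSet G D₂ := by
      refine swap_dom hdom hadj ?_
      intro x hx hax
      have : x ∈ G.neighborFinset ℓ := (SimpleGraph.mem_neighborFinset _ _ _).mpr hax
      rw [hNs] at this
      exact Finset.mem_singleton.mp this
    have hcard₂ : D₂.card = gamma G := by rw [hD₂, swap_card hℓ hsD, hcard]
    have hD₂S : D₂ ∈ S := by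
      simp only [hS, Finset.mem_filter, Finset.mem_powerset]
      exact ⟨Finset.subset_univ _, hdom₂, hcard₂⟩
    have hF : D₂.filter (fun z => G.degree z = 1)
        = (D.filter (fun z => G.degree z = 1)).erase ℓ := by
      ext w
      simp only [hD₂, Finset.mem_filter, Finset.mem_insert, Finset.mem_erase]
      constructor
      · rintro ⟨h1, h2⟩
        rcases h1 with rfl | ⟨hwℓ, hwD⟩
        · exact absurd h2 hs
        · exact ⟨hwℓ, hwD, h2⟩
      · rintro ⟨hwℓ, hwD, h2⟩
        exact ⟨Or.inr ⟨hwℓ, hwD⟩, h2⟩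
    have hℓmem : ℓ ∈ D.filter (fun z => G.degree z = 1) :=
      Finset.mem_filter.mpr ⟨hℓ, hdegℓ⟩
    have ha1 : 1 ≤ (D.filter (fun z => G.degree z = 1)).card :=
      Finset.card_pos.mpr ⟨ℓ, hℓmem⟩
    obtain ⟨b, hb⟩ : ∃ b, (D.filter (fun z => G.degree z = 1)).card = b + 1 :=
      ⟨(D.filter (fun z => G.degree z = 1)).card - 1, by omega⟩
    have hmono := hmin D₂ hD₂S
    have hf₂ : (D₂.filter (fun z => (G.neighborFinset z \ D₂).card = 1)).card ≤ nV := by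
      calc (D₂.filter (fun z => (G.neighborFinset z \ D₂).card = 1)).card
          ≤ D₂.card := Finset.card_filter_le _ _
        _ ≤ nV := Finset.card_le_univ _
    rw [hphi] at hmono
    simp only at hmono
    rw [hF, Finset.card_erase_of_mem hℓmem, hb] at hmono
    simp only [Nat.add_sub_cancel] at hmono
    have hmul : (nV + 1) * (b + 1) = (nV + 1) * b + (nV + 1) := by ring
    rw [hmul] at hmono
    omega
  -- H2 : every bad vertex privately dominates its unique outside neighbour
  have H2 : ∀ v ∈ D, (G.neighborFinset v \ D).card = 1 →
      ∀ u ∈ G.neighborFinset v \ D, ∀ w ∈ D, G.Adj w u → w = v := by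
    intro v hv hbad u hu w hw hadjwu
    by_contra hwv
    have hsing : G.neighborFinset v \ D = {u} := eq_singleton_of_card_one hbad hu
    have humem : u ∈ G.neighborFinset v := (Finset.mem_sdiff.mp hu).1
    have huD : u ∉ D := (Finset.mem_sdiff.mp hu).2
    have hadjvu : G.Adj v u := (SimpleGraph.mem_neighborFinset _ _ _).mp humem
    by_cases hleaf : G.degree v = 1
    · -- v is a leaf; then u is a leaf too, but u has two distinct neighbours v, w
      have hNv : G.neighborFinset v = {u} := eq_singleton_of_card_one hleaf humem
      have hdegu : G.degree u = 1 := H1 v hv hleaf u hNv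
      have hvmem : v ∈ G.neighborFinset u :=
        (SimpleGraph.mem_neighborFinset _ _ _).mpr hadjvu.symm
      have hwmem : w ∈ G.neighborFinset u :=
        (SimpleGraph.mem_neighborFinset _ _ _).mpr hadjwu.symm
      have h2 : 1 < (G.neighborFinset u).card :=
        Finset.one_lt_card.mpr ⟨v, hvmem, w, hwmem, fun h => hwv h.symm⟩
      have : (G.neighborFinset u).card = 1 := hdegu
      omega
    · -- v has another neighbour d inside D; erase v stays dominating
      have hc2 : 2 ≤ (G.neighborFinset v).card := by
        have h1 : 1 ≤ (G.neighborFinset v).card := Finset.card_pos.mpr ⟨u, humem⟩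
        have : (G.neighborFinset v).card ≠ 1 := hleaf
        omega
      obtain ⟨a, ha, b, hbm, hab⟩ := Finset.one_lt_card.mp hc2
      have hd : ∃ d ∈ G.neighborFinset v, d ≠ u := by
        by_cases hau : a = u
        · exact ⟨b, hbm, fun h => hab (h ▸ hau ▸ rfl)⟩
        · exact ⟨a, ha, hau⟩
      obtain ⟨d, hdmem, hdu⟩ := hd
      have hdD : d ∈ D := by
        by_contra hdD
        have : d ∈ G.neighborFinset v \ D := Finset.mem_sdiff.mpr ⟨hdmem, hdD⟩
        rw [hsing] at this
        exact hdu (Finset.mem_singleton.mp this)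
      have hadjvd : G.Adj v d := (SimpleGraph.mem_neighborFinset _ _ _).mp hdmem
      have hdv : d ≠ v := (G.ne_of_adj hadjvd).symm
      refine no_erase_dom hdom hcard hv ⟨d, Finset.mem_erase.mpr ⟨hdv, hdD⟩, hadjvd.symm⟩ ?_
      intro x hxD hadjx
      have hxu : x = u := by
        have : x ∈ G.neighborFinset v \ D :=
          Finset.mem_sdiff.mpr ⟨(SimpleGraph.mem_neighborFinset _ _ _).mpr hadjx, hxD⟩
        rw [hsing] at this
        exact Finset.mem_singleton.mp this
      subst hxu
      exact ⟨w, Finset.mem_erase.mpr ⟨hwv, hw⟩, hadjwu⟩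
  -- the construction
  set B : Finset V := D.filter (fun z => (G.neighborFinset z \ D).card = 1) with hB
  set U : Finset V := B.biUnion (fun v => G.neighborFinset v \ D) with hU
  set E : Finset V := D ∪ U with hE
  have hDE : D ⊆ E := Finset.subset_union_left
  have hEdom : IsDomSet G E := by
    intro y hy
    have hyD : y ∉ D := fun h => hy (hDE h)
    obtain ⟨d, hd, ha⟩ := hdom y hyD
    exact ⟨d, hDE hd, ha⟩
  have hcert : ∀ w ∈ E, (G.neighborFinset w \ E).card = 0 ∨
      2 ≤ (G.neighborFinset w \ E).card := by
    intro w hwE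
    have key : (G.neighborFinset w \ E).card ≠ 1 := by
      by_cases hwD : w ∈ D
      · by_cases hwbad : (G.neighborFinset w \ D).card = 1
        · have hempty : G.neighborFinset w \ E = ∅ := by
            rw [Finset.eq_empty_iff_forall_notMem]
            intro y hy
            rcases Finset.mem_sdiff.mp hy with ⟨hyN, hyE⟩
            apply hyE
            refine Finset.mem_union_right _ (Finset.mem_biUnion.mpr ⟨w, ?_, ?_⟩)
            · exact Finset.mem_filter.mpr ⟨hwD, hwbad⟩
            · exact Finset.mem_sdiff.mpr ⟨hyN, fun hyD => hyE (Finset.mem_union_left _ hyD)⟩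
          rw [hempty]
          simp
        · have hEeq : G.neighborFinset w \ E = G.neighborFinset w \ D := by
            apply Finset.Subset.antisymm
            · exact Finset.sdiff_subset_sdiff (le_refl _) hDE
            · intro y hy
              rcases Finset.mem_sdiff.mp hy with ⟨hyN, hyD⟩
              refine Finset.mem_sdiff.mpr ⟨hyN, ?_⟩
              intro hyE
              rcases Finset.mem_union.mp hyE with h | h
              · exact hyD h
              · obtain ⟨v', hv', hyv'⟩ := Finset.mem_biUnion.mp h
                have hv'D : v' ∈ D := (Finset.mem_filter.mp hv').1
                have hv'bad : (G.neighborFinset v' \ D).card = 1 := (Finset.mem_filter.mp hv').2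
                have hwv' : w = v' := H2 v' hv'D hv'bad y hyv' w hwD
                  ((SimpleGraph.mem_neighborFinset _ _ _).mp hyN)
                exact hwbad (hwv' ▸ hv'bad)
          rw [hEeq]
          exact hwbad
      · -- w was added: w = u_v for a bad v
        have hwU : w ∈ U := by
          rcases Finset.mem_union.mp hwE with h | h
          · exact absurd h hwD
          · exact h
        obtain ⟨v, hvB, hwv⟩ := Finset.mem_biUnion.mp hwU
        have hvD : v ∈ D := (Finset.mem_filter.mp hvB).1
        have hvbad : (G.neighborFinset v \ D).card = 1 := (Finset.mem_filter.mp hvB).2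
        have hsing : G.neighborFinset v \ D = {w} := eq_singleton_of_card_one hvbad hwv
        have hadjvw : G.Adj v w :=
          (SimpleGraph.mem_neighborFinset _ _ _).mp (Finset.mem_sdiff.mp hwv).1
        intro hcnt
        obtain ⟨x, hx⟩ := Finset.card_eq_one.mp hcnt
        have hxmem : x ∈ G.neighborFinset w \ E := by
          rw [hx]; exact Finset.mem_singleton_self x
        rcases Finset.mem_sdiff.mp hxmem with ⟨hxN, hxE⟩
        have hxD : x ∉ D := fun h => hxE (Finset.mem_union_left _ h)
        have hxv : x ≠ v := fun h => hxD (h ▸ hvD)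
        have hadjwx : G.Adj w x := (SimpleGraph.mem_neighborFinset _ _ _).mp hxN
        have hxw : x ≠ w := (G.ne_of_adj hadjwx).symm
        have hvw : v ≠ w := G.ne_of_adj hadjvw
        have hwnl : ¬ G.degree w = 1 := by
          intro h
          have hvmem : v ∈ G.neighborFinset w :=
            (SimpleGraph.mem_neighborFinset _ _ _).mpr hadjvw.symm
          have h2 : 1 < (G.neighborFinset w).card :=
            Finset.one_lt_card.mpr ⟨v, hvmem, x, hxN, fun hh => hxv hh.symm⟩
          have h3 : (G.neighborFinset w).card = 1 := h
          omega
        have hvnl : ¬ G.degree v = 1 := by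
          intro h
          have hNv : G.neighborFinset v = {w} :=
            eq_singleton_of_card_one h (Finset.mem_sdiff.mp hwv).1
          exact hwnl (H1 v hvD h w hNv)
        set D' : Finset V := insert w (D.erase v) with hD'
        have hvD' : v ∉ D' := by
          simp only [hD', Finset.mem_insert, Finset.mem_erase]
          push_neg
          exact ⟨hvw, fun h => absurd rfl h⟩
        have hxD' : x ∉ D' := by
          simp only [hD', Finset.mem_insert, Finset.mem_erase]
          push_neg
          exact ⟨hxw, fun _ => hxD⟩
        have hdom' : IsDomSet G D' := by
          refine swap_dom hdom hadjvw ?_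
          intro z hz haz
          have hzz : z ∈ G.neighborFinset v \ D :=
            Finset.mem_sdiff.mpr ⟨(SimpleGraph.mem_neighborFinset _ _ _).mpr haz, hz⟩
          rw [hsing] at hzz
          exact Finset.mem_singleton.mp hzz
        have hcard' : D'.card = gamma G := by rw [hD', swap_card hvD hwD, hcard]
        have hD'S : D' ∈ S := by
          simp only [hS, Finset.mem_filter, Finset.mem_powerset]
          exact ⟨Finset.subset_univ _, hdom', hcard'⟩
        have hLeq : D'.filter (fun z => G.degree z = 1)
            = D.filter (fun z => G.degree z = 1) := by
          ext z
          simp only [hD', Finset.mem_filter, Finset.mem_insert, Finset.mem_erase]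
          constructor
          · rintro ⟨h1, h2⟩
            rcases h1 with rfl | ⟨hzv, hzD⟩
            · exact absurd h2 hwnl
            · exact ⟨hzD, h2⟩
          · rintro ⟨h1, h2⟩
            refine ⟨Or.inr ⟨?_, h1⟩, h2⟩
            rintro rfl
            exact hvnl h2
        have hbadsub : D'.filter (fun z => (G.neighborFinset z \ D').card = 1)
            ⊆ B.erase v := by
          intro t ht
          rcases Finset.mem_filter.mp ht with ⟨htD', htcnt⟩
          have htw : t ≠ w := by
            rintro rfl
            have hvm : v ∈ G.neighborFinset t \ D' :=
              Finset.mem_sdiff.mpr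
                ⟨(SimpleGraph.mem_neighborFinset _ _ _).mpr hadjvw.symm, hvD'⟩
            have hxm : x ∈ G.neighborFinset t \ D' := Finset.mem_sdiff.mpr ⟨hxN, hxD'⟩
            have h2 : 1 < (G.neighborFinset t \ D').card :=
              Finset.one_lt_card.mpr ⟨v, hvm, x, hxm, fun hh => hxv hh.symm⟩
            omega
          have htD : t ∈ D := by
            rcases Finset.mem_insert.mp htD' with h | h
            · exact absurd h htw
            · exact (Finset.mem_erase.mp h).2
          have htv : t ≠ v := by
            rcases Finset.mem_insert.mp htD' with h | h
            · exact absurd h htw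
            · exact (Finset.mem_erase.mp h).1
          have hwnotin : w ∉ G.neighborFinset t := by
            intro hmem
            exact htv (H2 v hvD hvbad w hwv t htD
              ((SimpleGraph.mem_neighborFinset _ _ _).mp hmem))
          by_cases hvmem : v ∈ G.neighborFinset t
          · exfalso
            have hsub2 : insert v (G.neighborFinset t \ D) ⊆ G.neighborFinset t \ D' := by
              intro y hy
              rcases Finset.mem_insert.mp hy with rfl | hy'
              · exact Finset.mem_sdiff.mpr ⟨hvmem, hvD'⟩
              · rcases Finset.mem_sdiff.mp hy' with ⟨h1, h2⟩
                refine Finset.mem_sdiff.mpr ⟨h1, ?_⟩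
                intro hyD'
                rcases Finset.mem_insert.mp hyD' with rfl | h3
                · exact hwnotin h1
                · exact h2 (Finset.mem_erase.mp h3).2
            have hvnotin : v ∉ G.neighborFinset t \ D := fun h => (Finset.mem_sdiff.mp h).2 hvD
            have hcard2 : (insert v (G.neighborFinset t \ D)).card ≤ 1 := by
              calc (insert v (G.neighborFinset t \ D)).card
                  ≤ (G.neighborFinset t \ D').card := Finset.card_le_card hsub2
                _ = 1 := htcnt
            rw [Finset.card_insert_of_notMem hvnotin] at hcard2
            have hempty : G.neighborFinset t \ D = ∅ := Finset.card_eq_zero.mp (by omega)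
            have hsubD : G.neighborFinset t ⊆ D := by
              intro y hy
              by_contra hyD
              have hcon : y ∈ G.neighborFinset t \ D := Finset.mem_sdiff.mpr ⟨hy, hyD⟩
              rw [hempty] at hcon
              exact absurd hcon (Finset.notMem_empty y)
            exact not_nbrs_subset hdom hcard htD ⟨v, hvmem⟩ hsubD
          · have heq : G.neighborFinset t \ D' = G.neighborFinset t \ D := by
              ext y
              simp only [Finset.mem_sdiff, hD', Finset.mem_insert, Finset.mem_erase]
              constructor
              · rintro ⟨h1, h2⟩
                refine ⟨h1, fun hyD => h2 (Or.inr ⟨?_, hyD⟩)⟩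
                rintro rfl
                exact hvmem h1
              · rintro ⟨h1, h2⟩
                refine ⟨h1, ?_⟩
                rintro (rfl | ⟨_, hyD⟩)
                · exact hwnotin h1
                · exact h2 hyD
            rw [heq] at htcnt
            exact Finset.mem_erase.mpr ⟨htv, Finset.mem_filter.mpr ⟨htD, htcnt⟩⟩
        have hlt : (D'.filter (fun z => (G.neighborFinset z \ D').card = 1)).card
            < B.card := by
          have h1 := Finset.card_le_card hbadsub
          rw [Finset.card_erase_of_mem hvB] at h1
          have h2 : 1 ≤ B.card := Finset.card_pos.mpr ⟨v, hvB⟩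
          omega
        have hmono := hmin D' hD'S
        rw [hphi] at hmono
        simp only at hmono
        rw [hLeq, ← hB] at hmono
        have h3 := (add_le_add_iff_left
          ((nV + 1) * (D.filter (fun z => G.degree z = 1)).card)).mp hmono
        omega
    omega
  have hUcard : U.card ≤ D.card := by
    calc U.card ≤ ∑ v ∈ B, (G.neighborFinset v \ D).card := Finset.card_biUnion_le
      _ = ∑ _v ∈ B, 1 := Finset.sum_congr rfl (fun v hv => (Finset.mem_filter.mp hv).2)
      _ = B.card := by simp
      _ ≤ D.card := Finset.card_le_card (Finset.filter_subset _ _)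
  have hEcard : E.card ≤ 2 * gamma G := by
    have h1 := Finset.card_union_le D U
    rw [← hE] at h1
    omega
  exact le_trans (Nat.sInf_le ⟨E, ⟨hEdom, hcert⟩, rfl⟩) hEcard
end

section
/- If G is a diadem graph of order n, i.e., G has a leaf l whose unique neighbour is adjacent to exactly two leaves of G and the induced subgraph of G on the vertices other than l is the corona of some graph, then γ_cer(G) = n − 2. -/
open Finset

variable {V : Type*} [Fintype V] [DecidableEq V]

/-- A (nonempty) graph is the corona of some graph iff every vertex is a leaf or is
adjacent to exactly one leaf. -/
def IsCoronaGraph {W : Type*} [Fintype W] [DecidableEq W]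
    (H : SimpleGraph W) [DecidableRel H.Adj] : Prop :=
  ∀ v : W, IsLeaf H v ∨ IsWeakSupport H v

set_option linter.unusedSectionVars false
set_option maxHeartbeats 1000000

lemma leaf_nbr_eq (G : SimpleGraph V) [DecidableRel G.Adj] {v u w : V}
    (hv : G.degree v = 1) (hu : G.Adj v u) (hw : G.Adj v w) : w = u := by
  have h1 : (G.neighborFinset v).card ≤ 1 := le_of_eq hv
  exact Finset.card_le_one.mp h1 w ((SimpleGraph.mem_neighborFinset _ _ _).mpr hw) u
    ((SimpleGraph.mem_neighborFinset _ _ _).mpr hu)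

lemma mem_induce_nbr (G : SimpleGraph V) [DecidableRel G.Adj] {l : V}
    (x a : {v : V | v ≠ l}) :
    a ∈ (G.induce {v : V | v ≠ l}).neighborFinset x ↔ G.Adj x.val a.val :=
  SimpleGraph.mem_neighborFinset (G.induce {v : V | v ≠ l}) x a

lemma induce_degree_eq (G : SimpleGraph V) [DecidableRel G.Adj] (l : V)
    (x : {v : V | v ≠ l}) :
    (G.induce {v : V | v ≠ l}).degree x = ((G.neighborFinset x.val).filter (· ≠ l)).card := by
  refine Finset.card_bij (fun a _ => a.val) ?_ ?_ ?_
  · intro a ha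
    have h : G.Adj x.val a.val := (mem_induce_nbr G x a).mp ha
    simp only [Finset.mem_filter, SimpleGraph.mem_neighborFinset]
    exact ⟨h, a.2⟩
  · intro a _ b _ h; exact Subtype.ext h
  · intro b hb
    simp only [Finset.mem_filter, SimpleGraph.mem_neighborFinset] at hb
    exact ⟨⟨b, hb.2⟩, (mem_induce_nbr G x ⟨b, hb.2⟩).mpr hb.1, rfl⟩

theorem gammaCer_of_diadem (G : SimpleGraph V) [DecidableRel G.Adj]
    (l s : V) (hl : IsLeaf G l) (hadj : G.Adj l s)
    (hs : (leafNbrs G s).card = 2)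
    (hcorona : IsCoronaGraph (G.induce {v : V | v ≠ l})) :
    gammaCer G = Fintype.card V - 2 := by
  have hls : l ≠ s := G.ne_of_adj hadj
  have hlmem : l ∈ leafNbrs G s :=
    Finset.mem_filter.mpr ⟨(SimpleGraph.mem_neighborFinset _ _ _).mpr hadj.symm, hl⟩
  have h2 : ((leafNbrs G s).erase l).card = 1 := by
    rw [Finset.card_erase_of_mem hlmem, hs]
  obtain ⟨l', hl'⟩ := Finset.card_eq_one.mp h2
  have hl'memE : l' ∈ (leafNbrs G s).erase l := hl' ▸ Finset.mem_singleton_self l'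
  have hl'ne : l' ≠ l := (Finset.mem_erase.mp hl'memE).1
  have hl'mem : l' ∈ leafNbrs G s := (Finset.mem_erase.mp hl'memE).2
  have hl'leaf : G.degree l' = 1 := (Finset.mem_filter.mp hl'mem).2
  have hsl' : G.Adj s l' := (SimpleGraph.mem_neighborFinset _ _ _).mp (Finset.mem_filter.mp hl'mem).1
  have hLN : leafNbrs G s = {l, l'} := by
    refine (Finset.eq_of_subset_of_card_le ?_ ?_).symm
    · intro x hx
      rcases Finset.mem_insert.mp hx with h | h
      · exact h ▸ hlmem
      · exact (Finset.mem_singleton.mp h) ▸ hl'mem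
    · rw [hs, Finset.card_pair (Ne.symm hl'ne)]
  -- unique neighbour facts
  have adj_l : ∀ x, G.Adj x l → x = s := fun x hx => leaf_nbr_eq G hl hadj hx.symm
  have adj_l' : ∀ x, G.Adj x l' → x = s := fun x hx => leaf_nbr_eq G hl'leaf hsl'.symm hx.symm
  have hsdeg : 2 ≤ G.degree s := by
    calc 2 = (leafNbrs G s).card := hs.symm
    _ ≤ (G.neighborFinset s).card := Finset.card_le_card (Finset.filter_subset _ _)
  have hs_not_leaf : G.degree s ≠ 1 := by omega
  have hsnl : s ≠ l := hls.symm
  have hsnl' : s ≠ l' := fun h => G.irrefl (h ▸ hsl')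
  -- degree transfer for x ≠ s
  have hdegW : ∀ x : {v : V | v ≠ l}, x.val ≠ s →
      (G.induce {v : V | v ≠ l}).degree x = G.degree x.val := by
    intro x hx
    rw [induce_degree_eq G l]
    have : (G.neighborFinset x.val).filter (· ≠ l) = G.neighborFinset x.val := by
      apply Finset.filter_true_of_mem
      intro y hy hyl
      rw [hyl] at hy
      exact hx (adj_l x.val ((SimpleGraph.mem_neighborFinset _ _ _).mp hy))
    rw [this]; rfl
  -- if s is a leaf of G - l, its unique neighbour there is l'
  have hsW : ∀ a : V, a ≠ l → G.Adj s a →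
      (G.induce {v : V | v ≠ l}).degree ⟨s, hsnl⟩ = 1 → a = l' := by
    intro a hal hsa hdeg
    rw [induce_degree_eq G l] at hdeg
    have h1 : l' ∈ (G.neighborFinset s).filter (· ≠ l) :=
      Finset.mem_filter.mpr ⟨(SimpleGraph.mem_neighborFinset _ _ _).mpr hsl', hl'ne⟩
    have h2 : a ∈ (G.neighborFinset s).filter (· ≠ l) :=
      Finset.mem_filter.mpr ⟨(SimpleGraph.mem_neighborFinset _ _ _).mpr hsa, hal⟩
    exact Finset.card_le_one.mp (le_of_eq hdeg) a h2 l' h1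
  -- key lower bound
  have key : ∀ D : Finset V, IsCertDomSet G D → ∀ w, w ∉ D → w = l ∨ w = l' := by
    rintro D ⟨hdom, hcert⟩ w hw
    have hcert2 : ∀ v ∈ D, ∀ x, x ∈ G.neighborFinset v \ D →
        ∃ y ∈ G.neighborFinset v \ D, y ≠ x := by
      intro v hv x hx
      rcases hcert v hv with h0 | hge
      · exact absurd (Finset.card_eq_zero.mp h0 ▸ hx) (Finset.notMem_empty x)
      · exact Finset.exists_mem_ne (by omega) x
    have hsD : s ∈ D := by
      by_contra hsD
      by_cases hlD : l ∈ D
      · have hmem : s ∈ G.neighborFinset l \ D :=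
          Finset.mem_sdiff.mpr ⟨(SimpleGraph.mem_neighborFinset _ _ _).mpr hadj, hsD⟩
        obtain ⟨y, hy, hys⟩ := hcert2 l hlD s hmem
        have := leaf_nbr_eq G hl hadj ((SimpleGraph.mem_neighborFinset _ _ _).mp (Finset.mem_sdiff.mp hy).1)
        exact hys this
      · obtain ⟨u, huD, hu⟩ := hdom l hlD
        exact hsD ((adj_l u hu) ▸ huD)
    have claim1 : ∀ v u : V, G.degree v = 1 → G.Adj u v → u ∈ D := by
      intro v u hv hu
      by_cases hvD : v ∈ D
      · by_contra huD
        have hmem : u ∈ G.neighborFinset v \ D :=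
          Finset.mem_sdiff.mpr ⟨(SimpleGraph.mem_neighborFinset _ _ _).mpr hu.symm, huD⟩
        obtain ⟨y, hy, hyu⟩ := hcert2 v hvD u hmem
        exact hyu (leaf_nbr_eq G hv hu.symm ((SimpleGraph.mem_neighborFinset _ _ _).mp (Finset.mem_sdiff.mp hy).1))
      · obtain ⟨u', hu'D, hu'⟩ := hdom v hvD
        exact (leaf_nbr_eq G hv hu.symm hu'.symm) ▸ hu'D
    have claim2 : ∀ v, G.degree v = 1 → v ≠ l → v ≠ l' → v ∈ D := by
      intro v hv hvl hvl'
      by_contra hvD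
      obtain ⟨u, hnb⟩ := Finset.card_eq_one.mp hv
      have hvu : G.Adj v u := (SimpleGraph.mem_neighborFinset _ _ _).mp
        (hnb ▸ Finset.mem_singleton_self u)
      have huD : u ∈ D := claim1 v u hv hvu.symm
      have hus : u ≠ s := by
        intro h
        have : v ∈ leafNbrs G s := Finset.mem_filter.mpr
          ⟨(SimpleGraph.mem_neighborFinset _ _ _).mpr (h ▸ hvu).symm, hv⟩
        rw [hLN] at this
        rcases Finset.mem_insert.mp this with h' | h'
        · exact hvl h'
        · exact hvl' (Finset.mem_singleton.mp h')
      have hul : u ≠ l := by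
        intro h
        exact hs_not_leaf ((adj_l v (h ▸ hvu)) ▸ hv)
      have hvs : v ≠ s := fun h => hs_not_leaf (h ▸ hv)
      have hvmem : v ∈ G.neighborFinset u \ D :=
        Finset.mem_sdiff.mpr ⟨(SimpleGraph.mem_neighborFinset _ _ _).mpr hvu.symm, hvD⟩
      obtain ⟨x, hxmem, hxv⟩ := hcert2 u huD v hvmem
      have hux : G.Adj u x := (SimpleGraph.mem_neighborFinset _ _ _).mp (Finset.mem_sdiff.mp hxmem).1
      have hxD : x ∉ D := (Finset.mem_sdiff.mp hxmem).2
      have hxl : x ≠ l := fun h => hus (adj_l u (h ▸ hux))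
      have hxl' : x ≠ l' := fun h => hus (adj_l' u (h ▸ hux))
      have hxs : x ≠ s := fun h => hxD (h ▸ hsD)
      rcases hcorona ⟨u, hul⟩ with huleaf | huws
      · -- u has two induced neighbours v and x, contradiction
        have hv' : (⟨v, hvl⟩ : {a : V | a ≠ l}) ∈ (G.induce {a : V | a ≠ l}).neighborFinset ⟨u, hul⟩ :=
          (mem_induce_nbr G _ _).mpr hvu.symm
        have hx' : (⟨x, hxl⟩ : {a : V | a ≠ l}) ∈ (G.induce {a : V | a ≠ l}).neighborFinset ⟨u, hul⟩ :=
          (mem_induce_nbr G _ _).mpr hux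
        have := Finset.card_le_one.mp (le_of_eq huleaf) _ hx' _ hv'
        exact hxv (congrArg Subtype.val this)
      · -- v is the unique induced leaf-neighbour of u
        have hvln : (⟨v, hvl⟩ : {a : V | a ≠ l}) ∈ leafNbrs (G.induce {a : V | a ≠ l}) ⟨u, hul⟩ := by
          refine Finset.mem_filter.mpr ⟨(mem_induce_nbr G _ _).mpr hvu.symm, ?_⟩
          rw [hdegW ⟨v, hvl⟩ hvs]; exact hv
        have hxnotleaf : (G.induce {a : V | a ≠ l}).degree ⟨x, hxl⟩ ≠ 1 := by
          intro hxdeg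
          have hxln : (⟨x, hxl⟩ : {a : V | a ≠ l}) ∈ leafNbrs (G.induce {a : V | a ≠ l}) ⟨u, hul⟩ :=
            Finset.mem_filter.mpr ⟨(mem_induce_nbr G _ _).mpr hux, hxdeg⟩
          have := Finset.card_le_one.mp (le_of_eq huws) _ hxln _ hvln
          exact hxv (congrArg Subtype.val this)
        rcases hcorona ⟨x, hxl⟩ with hxleaf | hxws
        · exact hxnotleaf hxleaf
        · obtain ⟨y, hy⟩ := Finset.card_eq_one.mp hxws
          have hymem : y ∈ leafNbrs (G.induce {a : V | a ≠ l}) ⟨x, hxl⟩ :=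
            hy ▸ Finset.mem_singleton_self y
          have hxy : G.Adj x y.val := (mem_induce_nbr G _ _).mp (Finset.mem_filter.mp hymem).1
          have hydeg : (G.induce {a : V | a ≠ l}).degree y = 1 := (Finset.mem_filter.mp hymem).2
          by_cases hys : y.val = s
          · have hy' : y = (⟨s, hsnl⟩ : {a : V | a ≠ l}) := Subtype.ext hys
            rw [hy'] at hydeg
            have hsx : G.Adj s x := by
              have h' := hxy
              rw [hys] at h'
              exact h'.symm
            have hxeq : x = l' := hsW x hxl hsx hydeg
            exact hxl' hxeq
          · have hyleaf : G.degree y.val = 1 := by rw [← hdegW y hys]; exact hydeg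
            have hyl' : y.val ≠ l' := fun h => hxs (adj_l' x (h ▸ hxy))
            exact hxD (claim1 y.val x hyleaf hxy)
    -- final step
    by_contra hcon
    push_neg at hcon
    obtain ⟨hwl, hwl'⟩ := hcon
    have hws : w ≠ s := fun h => hw (h ▸ hsD)
    by_cases hwleaf : G.degree w = 1
    · exact hw (claim2 w hwleaf hwl hwl')
    · rcases hcorona ⟨w, hwl⟩ with hWleaf | hWws
      · exact hwleaf (by rw [← hdegW ⟨w, hwl⟩ hws]; exact hWleaf)
      · obtain ⟨y, hy⟩ := Finset.card_eq_one.mp hWws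
        have hymem : y ∈ leafNbrs (G.induce {a : V | a ≠ l}) ⟨w, hwl⟩ :=
          hy ▸ Finset.mem_singleton_self y
        have hwy : G.Adj w y.val := (mem_induce_nbr G _ _).mp (Finset.mem_filter.mp hymem).1
        have hydeg : (G.induce {a : V | a ≠ l}).degree y = 1 := (Finset.mem_filter.mp hymem).2
        by_cases hys : y.val = s
        · have hy' : y = (⟨s, hsnl⟩ : {a : V | a ≠ l}) := Subtype.ext hys
          rw [hy'] at hydeg
          have hsw : G.Adj s w := by
            have h' := hwy
            rw [hys] at h'
            exact h'.symm
          exact hwl' (hsW w hwl hsw hydeg)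
        · have hyleaf : G.degree y.val = 1 := by rw [← hdegW y hys]; exact hydeg
          have hyl' : y.val ≠ l' := fun h => hws (adj_l' w (h ▸ hwy))
          exact hw (claim1 y.val w hyleaf hwy)
  -- the witness set
  set D0 : Finset V := Finset.univ \ {l, l'} with hD0def
  have hsD0 : s ∈ D0 := by
    simp only [hD0def, Finset.mem_sdiff, Finset.mem_univ, true_and, Finset.mem_insert,
      Finset.mem_singleton]
    push_neg
    exact ⟨hsnl, hsnl'⟩
  have hD0 : IsCertDomSet G D0 := by
    constructor
    · intro v hv
      simp only [hD0def, Finset.mem_sdiff, Finset.mem_univ, true_and, not_not,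
        Finset.mem_insert, Finset.mem_singleton] at hv
      rcases hv with h | h
      · exact ⟨s, hsD0, h ▸ hadj.symm⟩
      · exact ⟨s, hsD0, h ▸ hsl'⟩
    · intro v hvD
      have hvl : v ≠ l := by
        intro h
        rw [h] at hvD
        simp [hD0def] at hvD
      have hvl' : v ≠ l' := by
        intro h
        rw [h] at hvD
        simp [hD0def] at hvD
      have hset : G.neighborFinset v \ D0 = (G.neighborFinset v).filter (fun x => x = l ∨ x = l') := by
        ext x
        simp only [hD0def, Finset.mem_sdiff, Finset.mem_univ, true_and, not_not,
          Finset.mem_insert, Finset.mem_singleton, Finset.mem_filter]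
      by_cases hvs : v = s
      · right
        have : (G.neighborFinset v).filter (fun x => x = l ∨ x = l') = {l, l'} := by
          ext x
          simp only [Finset.mem_filter, SimpleGraph.mem_neighborFinset, Finset.mem_insert,
            Finset.mem_singleton]
          constructor
          · exact fun h => h.2
          · rintro (h | h)
            · exact ⟨h ▸ (hvs ▸ hadj.symm), Or.inl h⟩
            · exact ⟨h ▸ (hvs ▸ hsl'), Or.inr h⟩
        rw [hset, this, Finset.card_pair (Ne.symm hl'ne)]
      · left
        rw [hset, Finset.card_eq_zero, Finset.filter_eq_empty_iff]
        intro x hx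
        rintro (h | h)
        · exact hvs (adj_l v (h ▸ (SimpleGraph.mem_neighborFinset _ _ _).mp hx))
        · exact hvs (adj_l' v (h ▸ (SimpleGraph.mem_neighborFinset _ _ _).mp hx))
  have hD0card : D0.card = Fintype.card V - 2 := by
    rw [hD0def, Finset.card_sdiff_of_subset (Finset.subset_univ _), Finset.card_univ,
      Finset.card_pair (Ne.symm hl'ne)]
  -- conclude
  unfold gammaCer
  apply le_antisymm
  · exact Nat.sInf_le ⟨D0, hD0, hD0card⟩
  · have hne : {n | ∃ D : Finset V, IsCertDomSet G D ∧ D.card = n}.Nonempty :=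
      ⟨Fintype.card V - 2, D0, hD0, hD0card⟩
    apply le_csInf hne
    rintro m ⟨D, hD, rfl⟩
    have hsub : Finset.univ \ D ⊆ {l, l'} := by
      intro w hw
      rcases key D hD w (Finset.mem_sdiff.mp hw).2 with h | h
      · exact Finset.mem_insert.mpr (Or.inl h)
      · exact Finset.mem_insert.mpr (Or.inr (Finset.mem_singleton.mpr h))
    have h1 : (Finset.univ \ D).card ≤ 2 := by
      calc (Finset.univ \ D).card ≤ ({l, l'} : Finset V).card := Finset.card_le_card hsub
      _ = 2 := Finset.card_pair (Ne.symm hl'ne)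
    have h2 : (Finset.univ \ D).card = Fintype.card V - D.card := by
      rw [Finset.card_sdiff_of_subset (Finset.subset_univ _), Finset.card_univ]
    have h3 : D.card ≤ Fintype.card V := Finset.card_le_univ D
    omega
end
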